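/- Let r : {(x,y) ∈ ℝ² : x > 0, y > 0} → ℝ³ be given by r(x,y) = ( −y((3/2)ln x + 3 ln y + x), x^{−3/2} y^{−2} √(1+x), y ). Then for all x > 0, y > 0 the 3×3 determinants of its partial derivatives satisfy: det[∂ₓr, ∂ᵧr, ∂ₓₓr] = (1/8)(4x+3)(2x+3)² / (x^{9/2} y (1+x)^{3/2}), det[∂ₓr, ∂ᵧr, ∂ₓᵧr] = (3/4)(2x+3)² / (x^{7/2} y² √(1+x)), and det[∂ₓr, ∂ᵧr, ∂ᵧᵧr] = (3/2)(2x+3)² / (x^{5/2} y³ √(1+x)). -/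

import Mathlib

/-- Hildebrand's parametrization of the case-1 complete hyperbolic affine sphere. -/
noncomputable def r (x y : ℝ) : Fin 3 → ℝ :=
  ![ -y * ((3 / 2) * Real.log x + 3 * Real.log y + x),
     x ^ (-(3 : ℝ) / 2) * y ^ (-(2 : ℝ)) * Real.sqrt (1 + x),
     y ]

/-- `∂ₓ r`. -/
noncomputable def rx (x y : ℝ) : Fin 3 → ℝ := fun i => deriv (fun s => r s y i) x
/-- `∂ᵧ r`. -/
noncomputable def ry (x y : ℝ) : Fin 3 → ℝ := fun i => deriv (fun s => r x s i) y
/-- `∂ₓₓ r`. -/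
noncomputable def rxx (x y : ℝ) : Fin 3 → ℝ := fun i => deriv (fun s => rx s y i) x
/-- `∂ₓᵧ r`. -/
noncomputable def rxy (x y : ℝ) : Fin 3 → ℝ := fun i => deriv (fun s => rx x s i) y
/-- `∂ᵧᵧ r`. -/
noncomputable def ryy (x y : ℝ) : Fin 3 → ℝ := fun i => deriv (fun s => ry x s i) y

/-!
The third coordinate of `r` is `y`, so each determinant is a 2×2 minor of the first two
coordinates. These are separable in `x` and `y`, and the only non-rational factor is
`profile x = x^(-3/2) √(1+x)`, whose logarithmic derivative `-3/(2x) + 1/(2(1+x))` is rational.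
Hence every partial derivative up to order two is `profile x` times a rational function, and
after writing `profile x = (1+x) / (x √x √(1+x))` the three identities become identities of
rational functions in `x`, `y`, `√x` and `√(1+x)`.
-/

open Real Filter Topology

namespace Hildebrand

lemma rpow_eq_pow_mul_sqrt {z c : ℝ} (hz : 0 ≤ z) (n : ℕ) (hc : c = n + 1 / 2) :
    z ^ c = z ^ n * √z := by
  rw [hc, ← rpow_natCast, sqrt_eq_rpow, ← rpow_add' hz (by positivity)]

lemma hasDerivAt_rpow_mul_one_add_rpow (a b : ℝ) {x : ℝ} (hx : 0 < x) :
    HasDerivAt (fun s => s ^ a * (1 + s) ^ b)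
      (x ^ a * (1 + x) ^ b * (a / x + b / (1 + x))) x := by
  have h1x : 0 < 1 + x := by linarith
  have h := (hasDerivAt_rpow_const (p := a) (Or.inl hx.ne')).mul
    ((hasDerivAt_rpow_const (p := b) (Or.inl h1x.ne')).comp x ((hasDerivAt_id x).const_add 1))
  refine h.congr_deriv ?_
  simp only [Function.comp_apply, rpow_sub_one hx.ne', rpow_sub_one h1x.ne']
  field_simp

noncomputable def profile (x : ℝ) : ℝ := x ^ (-(3 : ℝ) / 2) * √(1 + x)

lemma profile_eq_div {x : ℝ} (hx : 0 < x) : profile x = (1 + x) / (x * √x * √(1 + x)) := by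
  have h1x : 0 < 1 + x := by linarith
  have h32 : x ^ ((3 : ℝ) / 2) = x * √x := by
    rw [rpow_eq_pow_mul_sqrt hx.le 1 (by norm_num), pow_one]
  rw [profile, neg_div, rpow_neg hx.le, h32]
  field_simp
  rw [sq_sqrt h1x.le]

lemma hasDerivAt_profile {x : ℝ} (hx : 0 < x) :
    HasDerivAt profile (-(2 * x + 3) / (2 * x * (1 + x)) * profile x) x := by
  have h1x : 0 < 1 + x := by linarith
  have hfun : profile = fun s => s ^ (-(3 : ℝ) / 2) * (1 + s) ^ (1 / 2 : ℝ) := by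
    funext s; rw [profile, sqrt_eq_rpow]
  rw [hfun]
  refine (hasDerivAt_rpow_mul_one_add_rpow _ _ hx).congr_deriv ?_
  field_simp
  ring

lemma hasDerivAt_profile_deriv {x : ℝ} (hx : 0 < x) :
    HasDerivAt (fun s => -(2 * s + 3) / (2 * s * (1 + s)) * profile s)
      ((8 * x ^ 2 + 24 * x + 15) / (4 * x ^ 2 * (1 + x) ^ 2) * profile x) x := by
  have h1x : 0 < 1 + x := by linarith
  have hq : HasDerivAt (fun s => -(2 * s + 3) / (2 * s * (1 + s)))
      ((-(2 * 1) * (2 * x * (1 + x)) - -(2 * x + 3) * (2 * 1 * (1 + x) + 2 * x * 1))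
        / (2 * x * (1 + x)) ^ 2) x :=
    ((((hasDerivAt_id' x).const_mul 2).add_const 3).neg).div
      (((hasDerivAt_id' x).const_mul 2).mul ((hasDerivAt_id' x).const_add 1)) (by positivity)
  refine (hq.mul (hasDerivAt_profile hx)).congr_deriv ?_
  field_simp
  ring

lemma hasDerivAt_const_div_pow (c : ℝ) (n : ℕ) {y : ℝ} (hy : y ≠ 0) :
    HasDerivAt (fun s => c / s ^ n) (-(n * c) / y ^ (n + 1)) y := by
  refine ((hasDerivAt_const y c).div (hasDerivAt_pow n y) (pow_ne_zero n hy)).congr_deriv ?_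
  rcases n with _ | n
  · simp
  · push_cast
    field_simp
    ring

lemma deriv_apply_eq_vecCons {F : ℝ → Fin 3 → ℝ} {f g h : ℝ → ℝ} {a b c x : ℝ}
    (hF : ∀ᶠ s in 𝓝 x, F s = ![f s, g s, h s])
    (hf : HasDerivAt f a x) (hg : HasDerivAt g b x) (hh : HasDerivAt h c x) :
    (fun i => deriv (fun s => F s i) x) = ![a, b, c] := by
  funext i
  have hFi : (fun s => F s i) =ᶠ[𝓝 x] fun s => ![f s, g s, h s] i :=
    hF.mono fun s hs => congrFun hs i
  rw [hFi.deriv_eq]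
  fin_cases i
  · exact hf.deriv
  · exact hg.deriv
  · exact hh.deriv

lemma det_fin_three_of_col_two_eq_zero_one_zero (a b c d p q : ℝ) :
    Matrix.det (Matrix.of ![![a, b, 0], ![c, d, 1], ![p, q, 0]]) = b * p - a * q := by
  rw [Matrix.det_fin_three]
  simp only [Matrix.of_apply, Matrix.cons_val', Matrix.cons_val_zero, Matrix.cons_val_one,
    Matrix.cons_val, Matrix.cons_val_fin_one]
  ring

lemma r_eq (x y : ℝ) :
    r x y = ![-y * ((3 / 2) * log x + 3 * log y + x), profile x / y ^ 2, y] := by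
  have hy2 : y ^ (-(2 : ℝ)) = (y ^ 2)⁻¹ := by
    rw [show (-(2 : ℝ)) = ((-2 : ℤ) : ℝ) by norm_num, rpow_intCast, zpow_neg, zpow_ofNat]
  ext i
  fin_cases i
  · rfl
  · change x ^ (-(3 : ℝ) / 2) * y ^ (-(2 : ℝ)) * √(1 + x) = profile x / y ^ 2
    rw [hy2, profile]
    ring
  · rfl

lemma rx_eq {x : ℝ} (hx : 0 < x) (y : ℝ) :
    rx x y = ![-y * ((2 * x + 3) / (2 * x)),
      -(2 * x + 3) / (2 * x * (1 + x)) * profile x / y ^ 2, 0] := by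
  have hf : HasDerivAt (fun s => -y * ((3 / 2) * log s + 3 * log y + s))
      (-y * ((2 * x + 3) / (2 * x))) x := by
    refine ((((hasDerivAt_log hx.ne').const_mul (3 / 2)).add_const _).add
      (hasDerivAt_id' x)).const_mul (-y) |>.congr_deriv ?_
    field_simp
    ring
  exact deriv_apply_eq_vecCons (.of_forall fun s => r_eq s y) hf
    ((hasDerivAt_profile hx).div_const _) (hasDerivAt_const x y)

lemma ry_eq {y : ℝ} (hy : 0 < y) (x : ℝ) :
    ry x y = ![-((3 / 2) * log x + 3 * log y + x) - 3, -2 * profile x / y ^ 3, 1] := by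
  have hf : HasDerivAt (fun s => -s * ((3 / 2) * log x + 3 * log s + x))
      (-((3 / 2) * log x + 3 * log y + x) - 3) y := by
    refine (hasDerivAt_neg' (x := y)).mul
      (((hasDerivAt_log hy.ne').const_mul 3).const_add _ |>.add_const _) |>.congr_deriv ?_
    field_simp
    ring
  have hg := (hasDerivAt_const_div_pow (profile x) 2 hy.ne').congr_deriv
    (show -((2 : ℕ) * profile x) / y ^ (2 + 1) = -2 * profile x / y ^ 3 by push_cast; ring)
  exact deriv_apply_eq_vecCons (.of_forall fun s => r_eq x s) hf hg (hasDerivAt_id' y)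

lemma rxx_eq {x : ℝ} (hx : 0 < x) (y : ℝ) :
    rxx x y = ![3 * y / (2 * x ^ 2),
      (8 * x ^ 2 + 24 * x + 15) / (4 * x ^ 2 * (1 + x) ^ 2) * profile x / y ^ 2, 0] := by
  have hf : HasDerivAt (fun s => -y * ((2 * s + 3) / (2 * s))) (3 * y / (2 * x ^ 2)) x := by
    refine (((hasDerivAt_id' x).const_mul 2).add_const 3).div ((hasDerivAt_id' x).const_mul 2)
      (by positivity) |>.const_mul (-y) |>.congr_deriv ?_
    field_simp
    ring
  have hF : ∀ᶠ s in 𝓝 x, rx s y = ![-y * ((2 * s + 3) / (2 * s)),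
      -(2 * s + 3) / (2 * s * (1 + s)) * profile s / y ^ 2, 0] := by
    filter_upwards [eventually_gt_nhds hx] with s hs using rx_eq hs y
  exact deriv_apply_eq_vecCons hF hf ((hasDerivAt_profile_deriv hx).div_const _)
    (hasDerivAt_const x 0)

lemma rxy_eq {x : ℝ} (hx : 0 < x) {y : ℝ} (hy : y ≠ 0) :
    rxy x y =
      ![-((2 * x + 3) / (2 * x)), (2 * x + 3) / (x * (1 + x)) * profile x / y ^ 3, 0] := by
  have hg := (hasDerivAt_const_div_pow (-(2 * x + 3) / (2 * x * (1 + x)) * profile x) 2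
    hy).congr_deriv (show _ = (2 * x + 3) / (x * (1 + x)) * profile x / y ^ 3 by
      push_cast; field_simp)
  exact deriv_apply_eq_vecCons (.of_forall fun s => rx_eq hx s)
    (((hasDerivAt_neg' (x := y)).mul_const _).congr_deriv (by ring)) hg (hasDerivAt_const y 0)

lemma ryy_eq {y : ℝ} (hy : 0 < y) (x : ℝ) :
    ryy x y = ![-3 / y, 6 * profile x / y ^ 4, 0] := by
  have hf : HasDerivAt (fun s => -((3 / 2) * log x + 3 * log s + x) - 3) (-3 / y) y := by
    refine (((hasDerivAt_log hy.ne').const_mul 3).const_add _ |>.add_const _).neg.sub_const 3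
      |>.congr_deriv ?_
    field_simp
  have hg := (hasDerivAt_const_div_pow (-2 * profile x) 3 hy.ne').congr_deriv
    (show _ = 6 * profile x / y ^ 4 by push_cast; ring)
  have hF : ∀ᶠ s in 𝓝 y, ry x s = ![-((3 / 2) * log x + 3 * log s + x) - 3,
      -2 * profile x / s ^ 3, 1] := by
    filter_upwards [eventually_gt_nhds hy] with s hs using ry_eq hs x
  exact deriv_apply_eq_vecCons hF hf hg (hasDerivAt_const y 1)

end Hildebrand

open Hildebrand in
/-- The Blaschke-metric coefficients `L`, `M`, `N` of Hildebrand's case-1 immersion. -/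
theorem blaschke_coefficients_case1 :
    ∀ x y : ℝ, 0 < x → 0 < y →
      Matrix.det (Matrix.of ![rx x y, ry x y, rxx x y]) =
          (1 / 8) * (4 * x + 3) * (2 * x + 3) ^ 2 /
            (x ^ ((9 : ℝ) / 2) * y * (1 + x) ^ ((3 : ℝ) / 2)) ∧
      Matrix.det (Matrix.of ![rx x y, ry x y, rxy x y]) =
          (3 / 4) * (2 * x + 3) ^ 2 / (x ^ ((7 : ℝ) / 2) * y ^ 2 * Real.sqrt (1 + x)) ∧
      Matrix.det (Matrix.of ![rx x y, ry x y, ryy x y]) =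
          (3 / 2) * (2 * x + 3) ^ 2 / (x ^ ((5 : ℝ) / 2) * y ^ 3 * Real.sqrt (1 + x)) := by
  intro x y hx hy
  have h1x : 0 < 1 + x := by linarith
  have hsx : 0 < √x := sqrt_pos.2 hx
  have hs1x : 0 < √(1 + x) := sqrt_pos.2 h1x
  rw [rx_eq hx y, ry_eq hy x, rxx_eq hx y, rxy_eq hx hy.ne', ryy_eq hy x,
    det_fin_three_of_col_two_eq_zero_one_zero, det_fin_three_of_col_two_eq_zero_one_zero,
    det_fin_three_of_col_two_eq_zero_one_zero, profile_eq_div hx,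
    rpow_eq_pow_mul_sqrt hx.le 4 (by norm_num), rpow_eq_pow_mul_sqrt h1x.le 1 (by norm_num),
    rpow_eq_pow_mul_sqrt hx.le 3 (by norm_num), rpow_eq_pow_mul_sqrt hx.le 2 (by norm_num)]
  refine ⟨?_, ?_, ?_⟩ <;> field_simp <;> ring
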